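/- For every k ≥ 1 and n = 3^k, there is an odd cover of K_n^(3) of size (n−1)/2. Specifically, identifying the vertices with F_3^k and defining for each nonzero x ∈ F_3^k the complete 3-partite 3-graph H_x with parts {y : x·y = 0}, {y : x·y = 1}, {y : x·y = 2}, one has H_x = H_{2x}, and the resulting (3^k−1)/2 distinct hypergraphs cover every 3-subset of F_3^k an odd number of times. -/

import Mathlib

open Finset

/-- `e` is an edge of the complete `r`-partite `r`-graph with parts `P 0, ..., P (r-1)`:
it meets every part in exactly one vertex. -/
def IsEdge {α : Type*} [DecidableEq α] {r : ℕ} (P : Fin r → Finset α) (e : Finset α) : Prop :=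
  ∀ i, (e ∩ P i).card = 1

instance {α : Type*} [DecidableEq α] {r : ℕ} (P : Fin r → Finset α) (e : Finset α) :
    Decidable (IsEdge P e) :=
  inferInstanceAs (Decidable (∀ _, _))

abbrev V3 (k : ℕ) := Fin k → ZMod 3

def dot {k : ℕ} (x y : V3 k) : ZMod 3 := ∑ i, x i * y i

/-- The complete 3-partite 3-graph `H_x` with parts `{y : x·y = c}`, `c = 0, 1, 2`. -/
def HX {k : ℕ} (x : V3 k) : Fin 3 → Finset (V3 k) :=
  ![Finset.univ.filter fun y => dot x y = 0,
    Finset.univ.filter fun y => dot x y = 1,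
    Finset.univ.filter fun y => dot x y = 2]

/-- `S` contains exactly one of each pair `{x, 2x}` of nonzero vectors. -/
def IsRepSet {k : ℕ} (S : Finset (V3 k)) : Prop :=
  (0 : V3 k) ∉ S ∧ ∀ x : V3 k, x ≠ 0 → (x ∈ S ↔ (2 : ZMod 3) • x ∉ S)

namespace Stmt5Aux

variable {k : ℕ}

lemma dot_add_left (x y z : V3 k) : dot (x + y) z = dot x z + dot y z := by
  simp [dot, add_mul, Finset.sum_add_distrib]

lemma dot_sub_right (x y z : V3 k) : dot x (y - z) = dot x y - dot x z := by
  simp [dot, mul_sub, Finset.sum_sub_distrib]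

lemma dot_smul_left (c : ZMod 3) (x y : V3 k) : dot (c • x) y = c * dot x y := by
  simp [dot, Finset.mul_sum, mul_assoc]

lemma dot_smul_right (c : ZMod 3) (x y : V3 k) : dot x (c • y) = c * dot x y := by
  simp only [dot, Finset.mul_sum, Pi.smul_apply, smul_eq_mul]
  exact Finset.sum_congr rfl fun i _ => by ring

lemma dot_zero_left (y : V3 k) : dot 0 y = 0 := by simp [dot]

lemma two_smul_two_smul (x : V3 k) : (2 : ZMod 3) • ((2 : ZMod 3) • x) = x := by
  rw [smul_smul]; norm_num
  exact one_smul _ x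

lemma two_smul_ne_zero {x : V3 k} (hx : x ≠ 0) : (2 : ZMod 3) • x ≠ 0 := by
  intro h
  apply hx
  have := congrArg (fun y => (2 : ZMod 3) • y) h
  simpa [two_smul_two_smul] using this

lemma two_smul_eq_self_iff {x : V3 k} : (2 : ZMod 3) • x = x ↔ x = 0 := by
  constructor
  · intro h
    funext i
    have := congrFun h i
    simp [Pi.smul_apply] at this
    -- 2 * x i = x i → x i = 0
    have h2 : ∀ t : ZMod 3, 2 * t = t → t = 0 := by decide
    exact h2 _ this
  · rintro rfl; simp

/-- `HX (2•x)` is `HX x` with parts 1 and 2 swapped. -/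
lemma hx_two_smul (x : V3 k) (i : Fin 3) :
    HX ((2 : ZMod 3) • x) i = HX x (![0, 2, 1] i) := by
  have h0 : ∀ t : ZMod 3, (2 * t = 0 ↔ t = 0) := by decide
  have h1 : ∀ t : ZMod 3, (2 * t = 1 ↔ t = 2) := by decide
  have h2 : ∀ t : ZMod 3, (2 * t = 2 ↔ t = 1) := by decide
  fin_cases i <;> ext y <;>
    simp [HX, dot_smul_left, h0, h1, h2]

lemma isEdge_two_smul (x : V3 k) (e : Finset (V3 k)) :
    IsEdge (HX x) e ↔ IsEdge (HX ((2 : ZMod 3) • x)) e := by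
  constructor
  · intro h i
    rw [hx_two_smul]
    exact h _
  · intro h i
    have h2 := h (![0, 2, 1] i)
    rw [hx_two_smul] at h2
    have : (![0, 2, 1] : Fin 3 → Fin 3) (![0, 2, 1] i) = i := by fin_cases i <;> rfl
    rwa [this] at h2

lemma inter_filter_univ {α : Type*} [DecidableEq α] [Fintype α] (e : Finset α)
    (p : α → Prop) [DecidablePred p] : e ∩ univ.filter p = e.filter p := by
  ext z; simp

lemma dot_ne_of_isEdge {x : V3 k} {e : Finset (V3 k)} (h : IsEdge (HX x) e)
    {a b : V3 k} (ha : a ∈ e) (hb : b ∈ e) (hne : a ≠ b) : dot x a ≠ dot x b := by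
  intro heq
  have key : ∀ i : Fin 3, ¬ (2 ≤ (e ∩ HX x i).card) := by
    intro i h2
    have := h i
    omega
  have h3 : dot x a = 0 ∨ dot x a = 1 ∨ dot x a = 2 := by
    have := (by decide : ∀ t : ZMod 3, t = 0 ∨ t = 1 ∨ t = 2) (dot x a)
    exact this
  have pair : ∀ i : Fin 3, a ∈ HX x i → b ∈ HX x i → False := by
    intro i hai hbi
    apply key i
    calc 2 = ({a, b} : Finset (V3 k)).card := (Finset.card_pair hne).symm
    _ ≤ (e ∩ HX x i).card := by
        apply Finset.card_le_card
        intro z hz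
        simp only [Finset.mem_insert, Finset.mem_singleton] at hz
        rcases hz with rfl | rfl <;> simp [Finset.mem_inter, ha, hb, hai, hbi]
  rcases h3 with h' | h' | h'
  · exact pair 0 (by simp [HX, h']) (by simp [HX, ← heq, h'])
  · exact pair 1 (by simp [HX, h']) (by simp [HX, ← heq, h'])
  · exact pair 2 (by simp [HX, h']) (by simp [HX, ← heq, h'])

lemma isEdge_iff (x : V3 k) {a b c : V3 k} (hab : a ≠ b) (hac : a ≠ c) (hbc : b ≠ c) :
    IsEdge (HX x) {a, b, c} ↔
      (dot x a ≠ dot x b ∧ dot x b ≠ dot x c ∧ dot x a ≠ dot x c) := by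
  constructor
  · intro h
    refine ⟨dot_ne_of_isEdge h (by simp) (by simp) hab,
      dot_ne_of_isEdge h (by simp) (by simp) hbc,
      dot_ne_of_isEdge h (by simp) (by simp) hac⟩
  · rintro ⟨h1, h2, h3⟩ i
    have key : ∀ da db dc v : ZMod 3, da ≠ db → db ≠ dc → da ≠ dc →
        (da = v ∧ db ≠ v ∧ dc ≠ v) ∨ (da ≠ v ∧ db = v ∧ dc ≠ v) ∨
        (da ≠ v ∧ db ≠ v ∧ dc = v) := by decide
    have main : ∀ v : ZMod 3,
        (({a, b, c} : Finset (V3 k)).filter fun y => dot x y = v).card = 1 := by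
      intro v
      rcases key (dot x a) (dot x b) (dot x c) v h1 h2 h3 with ⟨p1, p2, p3⟩ | ⟨p1, p2, p3⟩ | ⟨p1, p2, p3⟩
      · rw [show (({a, b, c} : Finset (V3 k)).filter fun y => dot x y = v) = {a} by
          ext z
          simp only [Finset.mem_filter, Finset.mem_insert, Finset.mem_singleton]
          constructor
          · rintro ⟨rfl | rfl | rfl, hz⟩ <;> first | rfl | exact absurd hz (by assumption)
          · rintro rfl; exact ⟨Or.inl rfl, p1⟩]
        simp
      · rw [show (({a, b, c} : Finset (V3 k)).filter fun y => dot x y = v) = {b} by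
          ext z
          simp only [Finset.mem_filter, Finset.mem_insert, Finset.mem_singleton]
          constructor
          · rintro ⟨rfl | rfl | rfl, hz⟩ <;> first | rfl | exact absurd hz (by assumption)
          · rintro rfl; exact ⟨Or.inr (Or.inl rfl), p2⟩]
        simp
      · rw [show (({a, b, c} : Finset (V3 k)).filter fun y => dot x y = v) = {c} by
          ext z
          simp only [Finset.mem_filter, Finset.mem_insert, Finset.mem_singleton]
          constructor
          · rintro ⟨rfl | rfl | rfl, hz⟩ <;> first | rfl | exact absurd hz (by assumption)
          · rintro rfl; exact ⟨Or.inr (Or.inr rfl), p3⟩]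
        simp
    fin_cases i
    · show (({a, b, c} : Finset (V3 k)) ∩ univ.filter fun y => dot x y = 0).card = 1
      rw [inter_filter_univ]; exact main 0
    · show (({a, b, c} : Finset (V3 k)) ∩ univ.filter fun y => dot x y = 1).card = 1
      rw [inter_filter_univ]; exact main 1
    · show (({a, b, c} : Finset (V3 k)) ∩ univ.filter fun y => dot x y = 2).card = 1
      rw [inter_filter_univ]; exact main 2

lemma exists_dot_one {u : V3 k} (hu : u ≠ 0) : ∃ z : V3 k, dot z u = 1 := by
  have : ∃ i, u i ≠ 0 := by
    by_contra h
    push_neg at h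
    exact hu (funext h)
  obtain ⟨i, hi⟩ := this
  refine ⟨Pi.single i (u i)⁻¹, ?_⟩
  have : ∀ j, (Pi.single i (u i)⁻¹ : V3 k) j * u j = if j = i then (u i)⁻¹ * u i else 0 := by
    intro j
    by_cases hji : j = i
    · subst hji; simp
    · simp [Pi.single_apply, hji]
  rw [dot]
  simp only [this]
  rw [Finset.sum_ite_eq' Finset.univ i fun _ => (u i)⁻¹ * u i]
  simp [inv_mul_cancel₀ hi]

lemma fiber_cards_eq {u : V3 k} (hu : u ≠ 0) (s t : ZMod 3) :
    (univ.filter fun x => dot x u = s).card = (univ.filter fun x => dot x u = t).card := by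
  obtain ⟨z, hz⟩ := exists_dot_one hu
  apply Finset.card_nbij' (fun x => x + (t - s) • z) (fun x => x + (s - t) • z)
  · intro x hx
    simp only [Finset.mem_coe, Finset.mem_filter, Finset.mem_univ, true_and] at hx ⊢
    rw [dot_add_left, hx, dot_smul_left, hz]
    ring
  · intro x hx
    simp only [Finset.mem_coe, Finset.mem_filter, Finset.mem_univ, true_and] at hx ⊢
    rw [dot_add_left, hx, dot_smul_left, hz]
    ring
  · intro x _; module
  · intro x _; module

lemma fiber_card {u : V3 k} (hu : u ≠ 0) (s : ZMod 3) :
    3 * (univ.filter fun x => dot x u = s).card = 3 ^ k := by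
  have hsum : (univ : Finset (V3 k)).card
      = ∑ t : ZMod 3, (univ.filter fun x => dot x u = t).card :=
    Finset.card_eq_sum_card_fiberwise (fun x _ => Finset.mem_univ (dot x u))
  have huniv : (univ : Finset (V3 k)).card = 3 ^ k := by
    simp [Finset.card_univ]
  rw [huniv] at hsum
  rw [Finset.sum_congr rfl (fun t _ => fiber_cards_eq hu t s)] at hsum
  simp only [Finset.sum_const, Finset.card_univ] at hsum
  have : Fintype.card (ZMod 3) = 3 := by decide
  rw [this] at hsum
  simp only [smul_eq_mul] at hsum
  omega

lemma count_main {u v : V3 k} (hu : u ≠ 0) (hv : v ≠ 0) (hw : u + v ≠ 0) :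
    (univ.filter fun x : V3 k => dot x u ≠ 0 ∧ dot x v ≠ 0 ∧ dot x (u + v) ≠ 0).card
      = 2 * (univ.filter fun x : V3 k => dot x u = 0 ∧ dot x v = 0).card := by
  classical
  set A := univ.filter fun x : V3 k => dot x u = 0 with hA
  set B := univ.filter fun x : V3 k => dot x v = 0 with hB
  set C := univ.filter fun x : V3 k => dot x (u + v) = 0 with hC
  have dotw : ∀ x : V3 k, dot x (u + v) = dot x u + dot x v := by
    intro x; simp [dot, mul_add, Finset.sum_add_distrib]
  have hABC : (A ∪ B) ∩ C = A ∩ B := by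
    ext x
    simp only [hA, hB, hC, Finset.mem_inter, Finset.mem_union, Finset.mem_filter,
      Finset.mem_univ, true_and, dotw]
    constructor
    · rintro ⟨h1 | h1, h2⟩
      · exact ⟨h1, by rw [h1, zero_add] at h2; exact h2⟩
      · exact ⟨by rw [h1, add_zero] at h2; exact h2, h1⟩
    · rintro ⟨h1, h2⟩
      exact ⟨Or.inl h1, by rw [h1, h2, add_zero]⟩
  have e1 : (A ∪ B).card + (A ∩ B).card = A.card + B.card :=
    Finset.card_union_add_card_inter A B
  have e2 : ((A ∪ B) ∪ C).card + ((A ∪ B) ∩ C).card = (A ∪ B).card + C.card :=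
    Finset.card_union_add_card_inter (A ∪ B) C
  have eA : 3 * A.card = 3 ^ k := fiber_card hu 0
  have eB : 3 * B.card = 3 ^ k := fiber_card hv 0
  have eC : 3 * C.card = 3 ^ k := fiber_card hw 0
  have eQ : (univ.filter fun x : V3 k => dot x u = 0 ∧ dot x v = 0) = A ∩ B := by
    ext x
    simp [hA, hB]
  have e5 : (univ.filter fun x : V3 k =>
        dot x u ≠ 0 ∧ dot x v ≠ 0 ∧ dot x (u + v) ≠ 0).card + ((A ∪ B) ∪ C).card = 3 ^ k := by
    have hcompl : (univ.filter fun x : V3 k =>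
        dot x u ≠ 0 ∧ dot x v ≠ 0 ∧ dot x (u + v) ≠ 0) = ((A ∪ B) ∪ C)ᶜ := by
      ext x
      simp only [Finset.mem_compl, Finset.mem_union, not_or, hA, hB, hC,
        Finset.mem_filter, Finset.mem_univ, true_and, not_and]
      tauto
    rw [hcompl]
    rw [add_comm]
    have := Finset.card_add_card_compl ((A ∪ B) ∪ C)
    rw [this]
    simp [Finset.card_univ]
  rw [eQ]
  rw [hABC] at e2
  -- arithmetic
  have hAeqB : A.card = B.card := by omega
  omega

/-- The key pairing lemma: if `T` avoids `0`, is closed under `x ↦ 2•x`, and `S` is a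
representative set, then `T.card = 2 * (T ∩ S).card`. -/
lemma rep_split {S : Finset (V3 k)} (hS : IsRepSet S) {T : Finset (V3 k)}
    (hT0 : (0 : V3 k) ∉ T) (hTinv : ∀ x ∈ T, (2 : ZMod 3) • x ∈ T) :
    T.card = 2 * (T ∩ S).card := by
  classical
  have hinj : Function.Injective (fun x : V3 k => (2 : ZMod 3) • x) := by
    intro x y hxy
    have := congrArg (fun z => (2 : ZMod 3) • z) hxy
    simpa [two_smul_two_smul] using this
  have hdecomp : T = (T ∩ S) ∪ (T ∩ S).image (fun x => (2 : ZMod 3) • x) := by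
    ext x
    constructor
    · intro hx
      have hx0 : x ≠ 0 := fun h => hT0 (h ▸ hx)
      by_cases hxS : x ∈ S
      · exact Finset.mem_union_left _ (Finset.mem_inter.2 ⟨hx, hxS⟩)
      · have h2 : (2 : ZMod 3) • x ∈ S := by
          have := (hS.2 x hx0)
          by_contra h'
          exact hxS (this.2 h')
        have h2T : (2 : ZMod 3) • x ∈ T := hTinv x hx
        apply Finset.mem_union_right
        apply Finset.mem_image.2
        exact ⟨(2 : ZMod 3) • x, Finset.mem_inter.2 ⟨h2T, h2⟩, two_smul_two_smul x⟩
    · intro hx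
      rcases Finset.mem_union.1 hx with h | h
      · exact (Finset.mem_inter.1 h).1
      · obtain ⟨y, hy, rfl⟩ := Finset.mem_image.1 h
        exact hTinv y (Finset.mem_inter.1 hy).1
  have hdisj : Disjoint (T ∩ S) ((T ∩ S).image (fun x => (2 : ZMod 3) • x)) := by
    rw [Finset.disjoint_left]
    intro x hx hximg
    obtain ⟨y, hy, hyx⟩ := Finset.mem_image.1 hximg
    have hyS : y ∈ S := (Finset.mem_inter.1 hy).2
    have hy0 : y ≠ 0 := fun h => hS.1 (h ▸ hyS)
    have := (hS.2 y hy0).1 hyS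
    exact this (hyx ▸ (Finset.mem_inter.1 hx).2)
  have hcard := congrArg Finset.card hdecomp
  rw [Finset.card_union_of_disjoint hdisj, Finset.card_image_of_injective _ hinj] at hcard
  omega

lemma exists_repSet (k : ℕ) : ∃ S : Finset (V3 k), IsRepSet S := by
  classical
  let f := Fintype.equivFin (V3 k)
  refine ⟨univ.filter fun x => x ≠ 0 ∧ f x < f ((2 : ZMod 3) • x), ?_, ?_⟩
  · simp
  · intro x hx
    have hne : (2 : ZMod 3) • x ≠ x := fun h => hx (two_smul_eq_self_iff.1 h)
    have hfne : f ((2 : ZMod 3) • x) ≠ f x := fun h => hne (f.injective h)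
    constructor
    · intro hxS h2S
      rw [Finset.mem_filter] at hxS h2S
      have h1 := hxS.2.2
      have h2 := h2S.2.2
      rw [two_smul_two_smul] at h2
      exact lt_asymm h1 h2
    · intro h2S
      rw [Finset.mem_filter] at h2S ⊢
      refine ⟨Finset.mem_univ _, hx, ?_⟩
      rcases lt_trichotomy (f x) (f ((2 : ZMod 3) • x)) with h | h | h
      · exact h
      · exact absurd h.symm hfne
      · exact absurd (⟨Finset.mem_univ _, two_smul_ne_zero hx,
          by rwa [two_smul_two_smul]⟩ :
          (2 : ZMod 3) • x ∈ univ ∧ (2 : ZMod 3) • x ≠ 0 ∧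
            f ((2 : ZMod 3) • x) < f ((2 : ZMod 3) • ((2 : ZMod 3) • x))) h2S

end Stmt5Aux

open Stmt5Aux in
/-- For `n = 3^k` there is an odd cover of `K_n^{(3)}` of size `(n-1)/2`: the hypergraphs
`H_x` satisfy `H_x = H_{2x}` (as edge sets), and taking one representative of each pair
`{x, 2x}` of nonzero vectors gives `(3^k - 1)/2` hypergraphs covering every 3-set an odd
number of times. -/
theorem stmt5 (k : ℕ) (hk : 1 ≤ k) :
    (∀ x : V3 k, x ≠ 0 → ∀ e : Finset (V3 k),
      IsEdge (HX x) e ↔ IsEdge (HX ((2 : ZMod 3) • x)) e) ∧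
    ∃ S : Finset (V3 k), IsRepSet S ∧ S.card = (3 ^ k - 1) / 2 ∧
      ∀ e : Finset (V3 k), e.card = 3 →
        Odd ((S.filter fun x => IsEdge (HX x) e).card) := by
  classical
  refine ⟨fun x _ e => isEdge_two_smul x e, ?_⟩
  obtain ⟨S, hS⟩ := exists_repSet k
  refine ⟨S, hS, ?_, ?_⟩
  · -- cardinality
    have hT0 : (0 : V3 k) ∉ (univ : Finset (V3 k)).erase 0 := Finset.notMem_erase _ _
    have hTinv : ∀ x ∈ (univ : Finset (V3 k)).erase 0, (2 : ZMod 3) • x ∈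
        (univ : Finset (V3 k)).erase 0 := by
      intro x hx
      simp only [Finset.mem_erase, Finset.mem_univ, and_true] at hx ⊢
      exact two_smul_ne_zero hx
    have := rep_split hS hT0 hTinv
    have hcard : ((univ : Finset (V3 k)).erase 0).card = 3 ^ k - 1 := by
      rw [Finset.card_erase_of_mem (Finset.mem_univ _)]
      simp [Finset.card_univ]
    have hTS : (univ : Finset (V3 k)).erase 0 ∩ S = S := by
      apply Finset.inter_eq_right.2
      intro x hx
      simp only [Finset.mem_erase, Finset.mem_univ, and_true]
      exact fun h => hS.1 (h ▸ hx)
    rw [hcard, hTS] at this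
    omega
  · -- parity
    intro e he
    obtain ⟨a, b, c, hab, hac, hbc, rfl⟩ := Finset.card_eq_three.1 he
    set u := a - b with hu'
    set v := b - c with hv'
    have hu : u ≠ 0 := sub_ne_zero.2 hab
    have hv : v ≠ 0 := sub_ne_zero.2 hbc
    have huv : u + v = a - c := by rw [hu', hv']; abel
    have hw : u + v ≠ 0 := by rw [huv]; exact sub_ne_zero.2 hac
    -- rewrite the edge condition
    have hiff : ∀ x : V3 k, IsEdge (HX x) {a, b, c} ↔
        (dot x u ≠ 0 ∧ dot x v ≠ 0 ∧ dot x (u + v) ≠ 0) := by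
      intro x
      rw [isEdge_iff x hab hac hbc, hu', hv', huv]
      rw [dot_sub_right, dot_sub_right, dot_sub_right]
      constructor
      · rintro ⟨h1, h2, h3⟩
        exact ⟨sub_ne_zero.2 h1, sub_ne_zero.2 h2, sub_ne_zero.2 h3⟩
      · rintro ⟨h1, h2, h3⟩
        exact ⟨sub_ne_zero.1 h1, sub_ne_zero.1 h2, sub_ne_zero.1 h3⟩
    -- N = 2 M
    set T := univ.filter fun x : V3 k => dot x u ≠ 0 ∧ dot x v ≠ 0 ∧ dot x (u + v) ≠ 0 with hT'
    have hT0 : (0 : V3 k) ∉ T := by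
      simp [hT', dot_zero_left]
    have hTinv : ∀ x ∈ T, (2 : ZMod 3) • x ∈ T := by
      intro x hx
      simp only [hT', Finset.mem_filter, Finset.mem_univ, true_and, dot_smul_left] at hx ⊢
      have h2 : ∀ t : ZMod 3, t ≠ 0 → 2 * t ≠ 0 := by decide
      exact ⟨h2 _ hx.1, h2 _ hx.2.1, h2 _ hx.2.2⟩
    have hsplit := rep_split hS hT0 hTinv
    have hTS : T ∩ S = S.filter fun x => IsEdge (HX x) {a, b, c} := by
      ext x
      simp only [hT', Finset.mem_inter, Finset.mem_filter, Finset.mem_univ, true_and, hiff]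
      tauto
    rw [hTS] at hsplit
    -- N = 2 K
    have hN := count_main hu hv hw
    rw [← hT'] at hN
    -- K is odd : K = (Q.erase 0).card + 1 and Q.erase 0 splits evenly
    set Q := univ.filter fun x : V3 k => dot x u = 0 ∧ dot x v = 0 with hQ'
    have hQ0 : (0 : V3 k) ∈ Q := by simp [hQ', dot_zero_left]
    have hQinv : ∀ x ∈ Q.erase 0, (2 : ZMod 3) • x ∈ Q.erase 0 := by
      intro x hx
      simp only [hQ', Finset.mem_erase, Finset.mem_filter, Finset.mem_univ, true_and,
        dot_smul_left] at hx ⊢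
      refine ⟨two_smul_ne_zero hx.1, by rw [hx.2.1]; ring, by rw [hx.2.2]; ring⟩
    have hQe0 : (0 : V3 k) ∉ Q.erase 0 := Finset.notMem_erase _ _
    have hQsplit := rep_split hS hQe0 hQinv
    have hQcard : Q.card = (Q.erase 0).card + 1 := by
      rw [Finset.card_erase_of_mem hQ0]
      have : 1 ≤ Q.card := Finset.card_pos.2 ⟨0, hQ0⟩
      omega
    rw [Nat.odd_iff]
    omega
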